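/- The Schur complement is operator monotone and operator concave on positive semi-definite block operators: if A = [[A₁₁,A₁₂],[A₂₁,A₂₂]] and B = [[B₁₁,B₁₂],[B₂₁,B₂₂]] are conformally partitioned positive semi-definite bounded block operator matrices with invertible (2,2)-blocks and A ≤ B, then S(A) ≤ S(B), where S(A) = A₁₁ - A₁₂A₂₂⁻¹A₂₁; moreover (1-λ)S(A) + λS(B) ≤ S((1-λ)A + λB) for all λ ∈ [0,1]. -/

import Mathlib

open ContinuousLinearMap

variable {H₁ H₂ : Type}

/-- The block operator `[[A₁₁, A₁₂],[A₂₁, A₂₂]]` on `H₁ ⊕₂ H₂ = WithLp 2 (H₁ × H₂)`. -/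
noncomputable def blockCLM [NormedAddCommGroup H₁] [InnerProductSpace ℂ H₁] [CompleteSpace H₁]
    [NormedAddCommGroup H₂] [InnerProductSpace ℂ H₂] [CompleteSpace H₂]
    (A11 : H₁ →L[ℂ] H₁) (A12 : H₂ →L[ℂ] H₁) (A21 : H₁ →L[ℂ] H₂) (A22 : H₂ →L[ℂ] H₂) :
    WithLp 2 (H₁ × H₂) →L[ℂ] WithLp 2 (H₁ × H₂) :=
  ((WithLp.prodContinuousLinearEquiv 2 ℂ H₁ H₂).symm.toContinuousLinearMap).comp
    ((((A11.comp (fst ℂ H₁ H₂) + A12.comp (snd ℂ H₁ H₂))).prod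
        ((A21.comp (fst ℂ H₁ H₂) + A22.comp (snd ℂ H₁ H₂)))).comp
      (WithLp.prodContinuousLinearEquiv 2 ℂ H₁ H₂).toContinuousLinearMap)

/-!
For a positive block operator `P` with invertible `P₂₂`, the quadratic form of the Schur complement
is a minimum: `⟪S(P) x, x⟫ ≤ ⟪P w, w⟫` for every `w` with first component `x`, with equality at
`w = (x, -P₂₂⁻¹ P₂₁ x)`, because there `P w = (S(P) x, 0)` is orthogonal to every `(0, y)`.
A pointwise infimum of the forms `P ↦ ⟪P w, w⟫`, which are monotone and affine in `P`, is
monotone and concave.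
-/

open scoped ComplexOrder InnerProductSpace

namespace ContinuousLinearMap

variable {E : Type*} [NormedAddCommGroup E] [InnerProductSpace ℂ E]

/- `≤` on `ℂ` (`ComplexOrder`) forces equal imaginary parts; a complex operator with real
quadratic form is symmetric. -/
lemma isPositive_sub_iff_forall_inner_le {S T : E →L[ℂ] E} :
    (T - S).IsPositive ↔ ∀ x, ⟪S x, x⟫_ℂ ≤ ⟪T x, x⟫_ℂ := by
  have hsub (x : E) : ⟪(T - S) x, x⟫_ℂ = ⟪T x, x⟫_ℂ - ⟪S x, x⟫_ℂ := by
    rw [sub_apply, inner_sub_left]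
  refine ⟨fun h x => sub_nonneg.1 (hsub x ▸ h.inner_nonneg_left x), fun h => ?_⟩
  rw [isPositive_iff_complex]
  intro x
  have hx := Complex.nonneg_iff.1 (hsub x ▸ sub_nonneg.2 (h x))
  exact ⟨Complex.ext rfl hx.2, hx.1⟩

lemma IsPositive.inner_map_self_le_add_of_inner_eq_zero {T : E →L[ℂ] E} (hT : T.IsPositive)
    {v d : E} (h : ⟪T v, d⟫_ℂ = 0) : ⟪T v, v⟫_ℂ ≤ ⟪T (v + d), v + d⟫_ℂ := by
  have h' : ⟪T d, v⟫_ℂ = 0 := by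
    rw [hT.inner_left_eq_inner_right, ← inner_conj_symm, h, map_zero]
  have hsplit : ⟪T (v + d), v + d⟫_ℂ = ⟪T v, v⟫_ℂ + ⟪T d, d⟫_ℂ := by
    simp only [map_add, inner_add_left, inner_add_right, h, h']
    ring
  rw [hsplit]
  exact le_add_of_nonneg_right (hT.inner_nonneg_left d)

lemma inner_smul_add_smul_apply (a b : ℝ) (S T : E →L[ℂ] E) (x : E) :
    ⟪(a • S + b • T) x, x⟫_ℂ = a • ⟪S x, x⟫_ℂ + b • ⟪T x, x⟫_ℂ := by
  simp only [add_apply, smul_apply, inner_add_left, RCLike.real_smul_eq_coe_smul (K := ℂ),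
    inner_smul_left, RCLike.conj_ofReal, smul_eq_mul]

end ContinuousLinearMap

section Blocks

variable [NormedAddCommGroup H₁] [InnerProductSpace ℂ H₁] [CompleteSpace H₁]
  [NormedAddCommGroup H₂] [InnerProductSpace ℂ H₂] [CompleteSpace H₂]

@[simp]
lemma blockCLM_apply (A11 : H₁ →L[ℂ] H₁) (A12 : H₂ →L[ℂ] H₁) (A21 : H₁ →L[ℂ] H₂)
    (A22 : H₂ →L[ℂ] H₂) (v : WithLp 2 (H₁ × H₂)) :
    blockCLM A11 A12 A21 A22 v = WithLp.toLp 2 (A11 v.fst + A12 v.snd, A21 v.fst + A22 v.snd) :=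
  rfl

lemma blockCLM_add (A11 B11 : H₁ →L[ℂ] H₁) (A12 B12 : H₂ →L[ℂ] H₁) (A21 B21 : H₁ →L[ℂ] H₂)
    (A22 B22 : H₂ →L[ℂ] H₂) :
    blockCLM (A11 + B11) (A12 + B12) (A21 + B21) (A22 + B22)
      = blockCLM A11 A12 A21 A22 + blockCLM B11 B12 B21 B22 := by
  ext v
  simp only [blockCLM_apply, add_apply, ← WithLp.toLp_add, Prod.mk_add_mk, add_add_add_comm]

lemma blockCLM_smul (c : ℝ) (A11 : H₁ →L[ℂ] H₁) (A12 : H₂ →L[ℂ] H₁) (A21 : H₁ →L[ℂ] H₂)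
    (A22 : H₂ →L[ℂ] H₂) :
    blockCLM (c • A11) (c • A12) (c • A21) (c • A22) = c • blockCLM A11 A12 A21 A22 := by
  ext v
  simp only [blockCLM_apply, smul_apply, ← WithLp.toLp_smul, Prod.smul_mk, smul_add]

def schurComplement (P11 : H₁ →L[ℂ] H₁) (P12 : H₂ →L[ℂ] H₁) (P21 : H₁ →L[ℂ] H₂)
    (P22inv : H₂ →L[ℂ] H₂) : H₁ →L[ℂ] H₁ :=
  P11 - P12.comp (P22inv.comp P21)

def schurMinimizer (P21 : H₁ →L[ℂ] H₂) (P22inv : H₂ →L[ℂ] H₂) (x : H₁) : WithLp 2 (H₁ × H₂) :=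
  WithLp.toLp 2 (x, -P22inv (P21 x))

variable (P11 : H₁ →L[ℂ] H₁) (P12 : H₂ →L[ℂ] H₁) (P21 : H₁ →L[ℂ] H₂) {P22 P22inv : H₂ →L[ℂ] H₂}

lemma blockCLM_schurMinimizer (hinv : P22.comp P22inv = 1) (x : H₁) :
    blockCLM P11 P12 P21 P22 (schurMinimizer P21 P22inv x)
      = WithLp.toLp 2 (schurComplement P11 P12 P21 P22inv x, 0) := by
  have h : P22 (P22inv (P21 x)) = P21 x := by simpa using congr($hinv (P21 x))
  simp [schurMinimizer, schurComplement, h, sub_eq_add_neg]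

lemma inner_blockCLM_schurMinimizer (hinv : P22.comp P22inv = 1) (x : H₁) :
    ⟪blockCLM P11 P12 P21 P22 (schurMinimizer P21 P22inv x), schurMinimizer P21 P22inv x⟫_ℂ
      = ⟪schurComplement P11 P12 P21 P22inv x, x⟫_ℂ := by
  rw [blockCLM_schurMinimizer P11 P12 P21 hinv]
  simp [schurMinimizer]

lemma inner_schurComplement_le (hP : (blockCLM P11 P12 P21 P22).IsPositive)
    (hinv : P22.comp P22inv = 1) (w : WithLp 2 (H₁ × H₂)) :
    ⟪schurComplement P11 P12 P21 P22inv w.fst, w.fst⟫_ℂ ≤ ⟪blockCLM P11 P12 P21 P22 w, w⟫_ℂ := by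
  set v := schurMinimizer P21 P22inv w.fst
  have horth : ⟪blockCLM P11 P12 P21 P22 v, w - v⟫_ℂ = 0 := by
    rw [blockCLM_schurMinimizer P11 P12 P21 hinv]
    simp [v, schurMinimizer]
  have h := hP.inner_map_self_le_add_of_inner_eq_zero horth
  rwa [add_sub_cancel, inner_blockCLM_schurMinimizer P11 P12 P21 hinv] at h

end Blocks

theorem schur_complement_monotone_concave_general
    [NormedAddCommGroup H₁] [InnerProductSpace ℂ H₁] [CompleteSpace H₁]
    [NormedAddCommGroup H₂] [InnerProductSpace ℂ H₂] [CompleteSpace H₂]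
    (A11 : H₁ →L[ℂ] H₁) (A12 : H₂ →L[ℂ] H₁) (A21 : H₁ →L[ℂ] H₂) (A22 : H₂ →L[ℂ] H₂)
    (B11 : H₁ →L[ℂ] H₁) (B12 : H₂ →L[ℂ] H₁) (B21 : H₁ →L[ℂ] H₂) (B22 : H₂ →L[ℂ] H₂)
    (hA : (blockCLM A11 A12 A21 A22).IsPositive)
    (hB : (blockCLM B11 B12 B21 B22).IsPositive)
    (A22inv : H₂ →L[ℂ] H₂) (hA22 : A22.comp A22inv = 1)
    (B22inv : H₂ →L[ℂ] H₂) (hB22 : B22.comp B22inv = 1) :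
    -- monotonicity: `A ≤ B` implies `S(A) ≤ S(B)`
    ((blockCLM B11 B12 B21 B22 - blockCLM A11 A12 A21 A22).IsPositive →
      ((B11 - B12.comp (B22inv.comp B21)) - (A11 - A12.comp (A22inv.comp A21))).IsPositive) ∧
    -- concavity: `(1-λ)S(A) + λS(B) ≤ S((1-λ)A + λB)`
    (∀ l : ℝ, 0 ≤ l → l ≤ 1 →
      ∀ C22inv : H₂ →L[ℂ] H₂,
        ((1 - l) • A22 + l • B22).comp C22inv = 1 →
        C22inv.comp ((1 - l) • A22 + l • B22) = 1 →
      ((((1 - l) • A11 + l • B11) -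
          ((1 - l) • A12 + l • B12).comp (C22inv.comp ((1 - l) • A21 + l • B21))) -
        ((1 - l) • (A11 - A12.comp (A22inv.comp A21)) +
          l • (B11 - B12.comp (B22inv.comp B21)))).IsPositive) := by
  refine ⟨fun hAB => ?_, fun l hl0 hl1 C22inv hC _ => ?_⟩
  · refine isPositive_sub_iff_forall_inner_le.2 fun x => ?_
    let v := schurMinimizer B21 B22inv x
    calc ⟪schurComplement A11 A12 A21 A22inv x, x⟫_ℂ
        ≤ ⟪blockCLM A11 A12 A21 A22 v, v⟫_ℂ := inner_schurComplement_le A11 A12 A21 hA hA22 v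
      _ ≤ ⟪blockCLM B11 B12 B21 B22 v, v⟫_ℂ := isPositive_sub_iff_forall_inner_le.1 hAB v
      _ = ⟪schurComplement B11 B12 B21 B22inv x, x⟫_ℂ := inner_blockCLM_schurMinimizer B11 B12 B21 hB22 x
  · refine isPositive_sub_iff_forall_inner_le.2 fun x => ?_
    let v := schurMinimizer ((1 - l) • A21 + l • B21) C22inv x
    calc ⟪((1 - l) • schurComplement A11 A12 A21 A22inv
            + l • schurComplement B11 B12 B21 B22inv) x, x⟫_ℂ
        = (1 - l) • ⟪schurComplement A11 A12 A21 A22inv x, x⟫_ℂ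
            + l • ⟪schurComplement B11 B12 B21 B22inv x, x⟫_ℂ := inner_smul_add_smul_apply ..
      _ ≤ (1 - l) • ⟪blockCLM A11 A12 A21 A22 v, v⟫_ℂ + l • ⟪blockCLM B11 B12 B21 B22 v, v⟫_ℂ := by
        gcongr
        exacts [inner_schurComplement_le A11 A12 A21 hA hA22 v,
          inner_schurComplement_le B11 B12 B21 hB hB22 v]
      _ = ⟪blockCLM ((1 - l) • A11 + l • B11) ((1 - l) • A12 + l • B12)
            ((1 - l) • A21 + l • B21) ((1 - l) • A22 + l • B22) v, v⟫_ℂ := by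
        rw [blockCLM_add, blockCLM_smul, blockCLM_smul, inner_smul_add_smul_apply]
      _ = _ := inner_blockCLM_schurMinimizer _ _ _ hC x

/-- The Schur complement is operator monotone and operator concave on positive
semi-definite block operators with boundedly invertible `(2,2)`-blocks. -/
theorem schur_complement_monotone_concave
    [NormedAddCommGroup H₁] [InnerProductSpace ℂ H₁] [CompleteSpace H₁]
    [NormedAddCommGroup H₂] [InnerProductSpace ℂ H₂] [CompleteSpace H₂]
    (A11 : H₁ →L[ℂ] H₁) (A12 : H₂ →L[ℂ] H₁) (A21 : H₁ →L[ℂ] H₂) (A22 : H₂ →L[ℂ] H₂)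
    (B11 : H₁ →L[ℂ] H₁) (B12 : H₂ →L[ℂ] H₁) (B21 : H₁ →L[ℂ] H₂) (B22 : H₂ →L[ℂ] H₂)
    (hA : (blockCLM A11 A12 A21 A22).IsPositive)
    (hB : (blockCLM B11 B12 B21 B22).IsPositive)
    (A22inv : H₂ →L[ℂ] H₂) (hA22 : A22.comp A22inv = 1) (hA22' : A22inv.comp A22 = 1)
    (B22inv : H₂ →L[ℂ] H₂) (hB22 : B22.comp B22inv = 1) (hB22' : B22inv.comp B22 = 1) :
    -- monotonicity: `A ≤ B` implies `S(A) ≤ S(B)`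
    ((blockCLM B11 B12 B21 B22 - blockCLM A11 A12 A21 A22).IsPositive →
      ((B11 - B12.comp (B22inv.comp B21)) - (A11 - A12.comp (A22inv.comp A21))).IsPositive) ∧
    -- concavity: `(1-λ)S(A) + λS(B) ≤ S((1-λ)A + λB)`
    (∀ l : ℝ, 0 ≤ l → l ≤ 1 →
      ∀ C22inv : H₂ →L[ℂ] H₂,
        ((1 - l) • A22 + l • B22).comp C22inv = 1 →
        C22inv.comp ((1 - l) • A22 + l • B22) = 1 →
      ((((1 - l) • A11 + l • B11) -
          ((1 - l) • A12 + l • B12).comp (C22inv.comp ((1 - l) • A21 + l • B21))) -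
        ((1 - l) • (A11 - A12.comp (A22inv.comp A21)) +
          l • (B11 - B12.comp (B22inv.comp B21)))).IsPositive) :=
  schur_complement_monotone_concave_general A11 A12 A21 A22 B11 B12 B21 B22 hA hB A22inv hA22 B22inv
    hB22
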